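/- Let d ≥ 1, let S be a symmetric d × d real matrix, let U = (u_1, …, u_d) be a d × d orthogonal real matrix (so u_1, …, u_d form an orthonormal basis of ℝ^d), and let v take the value √d u_k with probability 1/d for each k = 1, …, d. Then E[v v^⊤ S v v^⊤] = d · U diag(U^⊤ S U) U^⊤. -/
import Mathlib


open MeasureTheory ProbabilityTheory Matrix

noncomputable section

lemma integrable_dirac_aux {α E : Type*} [MeasurableSpace α] [MeasurableSingletonClass α]
    [NormedAddCommGroup E] {f : α → E} (hf : StronglyMeasurable f) (a : α) :
    Integrable f (Measure.dirac a) :=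
  ⟨hf.aestronglyMeasurable, by
    rw [HasFiniteIntegral, lintegral_dirac]; exact ENNReal.coe_lt_top⟩

/-- Proposition 2, case (U).
Let `U` be a `d × d` orthogonal matrix with columns `u₁, …, u_d` (an orthonormal basis of
`ℝ^d`), and let `v` be sampled uniformly from `{√d u₁, …, √d u_d}`. For a symmetric `S`,
`E[v vᵀ S v vᵀ] = d · U diag(Uᵀ S U) Uᵀ`. -/
theorem orthonormal_basis_direction_Q
    {d : ℕ} (hd : 1 ≤ d) (S : Matrix (Fin d) (Fin d) ℝ) (hS : S.IsSymm)
    (U : Matrix (Fin d) (Fin d) ℝ) (hU : Uᵀ * U = 1) :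
    (Matrix.of fun i j =>
        ∫ v : Fin d → ℝ, v i * v j * (∑ k, ∑ l, v k * S k l * v l)
          ∂((d : ENNReal)⁻¹ •
              ∑ k : Fin d, Measure.dirac (Real.sqrt d • (fun i => U i k)))) =
      (d : ℝ) • (U * Matrix.diagonal (fun k => (Uᵀ * S * U) k k) * Uᵀ) := by
  have hd0 : (d : ℝ) ≠ 0 := Nat.cast_ne_zero.mpr (by omega)
  have hsq : Real.sqrt d * Real.sqrt d = (d : ℝ) := Real.mul_self_sqrt (Nat.cast_nonneg d)
  ext i j
  have hsm : ∀ (i j : Fin d), StronglyMeasurable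
      (fun v : Fin d → ℝ => v i * v j * (∑ k, ∑ l, v k * S k l * v l)) := by
    intro i j
    apply Measurable.stronglyMeasurable
    fun_prop
  rw [Matrix.of_apply, integral_smul_measure,
    integral_finset_sum_measure (fun k _ => integrable_dirac_aux (hsm i j) _)]
  simp only [integral_dirac, Pi.smul_apply, smul_eq_mul]
  have hterm : ∀ k : Fin d,
      (Real.sqrt d * U i k) * (Real.sqrt d * U j k) *
        (∑ a, ∑ b, (Real.sqrt d * U a k) * S a b * (Real.sqrt d * U b k)) =
      (d : ℝ) * ((d : ℝ) * (U i k * ((Uᵀ * S * U) k k * U j k))) := by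
    intro k
    have expand : (Uᵀ * S * U) k k = ∑ a, ∑ b, U a k * (S a b * U b k) := by
      rw [Matrix.mul_assoc]
      simp [Matrix.mul_apply, Matrix.transpose_apply, Finset.mul_sum]
    have : (∑ a, ∑ b, (Real.sqrt d * U a k) * S a b * (Real.sqrt d * U b k)) =
        (d : ℝ) * (Uᵀ * S * U) k k := by
      rw [expand, Finset.mul_sum]
      refine Finset.sum_congr rfl fun a _ => ?_
      rw [Finset.mul_sum]
      refine Finset.sum_congr rfl fun b _ => ?_
      linear_combination (U a k * S a b * U b k) * hsq
    rw [this]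
    linear_combination (U i k * U j k * (d : ℝ) * (Uᵀ * S * U) k k) * hsq
  rw [Finset.sum_congr rfl fun k _ => hterm k, ← Finset.mul_sum, ← Finset.mul_sum]
  rw [ENNReal.toReal_inv, ENNReal.toReal_natCast]
  have hrhs : ((U * Matrix.diagonal (fun k => (Uᵀ * S * U) k k) * Uᵀ)) i j =
      ∑ k, U i k * ((Uᵀ * S * U) k k * U j k) := by
    rw [Matrix.mul_assoc]
    simp [Matrix.mul_apply, Matrix.diagonal, Matrix.transpose_apply, Finset.mul_sum,
      Finset.sum_ite_eq, mul_comm, mul_left_comm]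
  rw [Matrix.smul_apply, smul_eq_mul, hrhs]
  set A := ∑ k : Fin d, U i k * ((Uᵀ * S * U) k k * U j k)
  field_simp
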